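/- arXiv:0906.1798 — 2 statements merged into one kernel-verified Lean document; each statement's English description precedes it below -/
import Mathlib

section
/- Let A be SPD with solution x* of Ax=b, r_k = b - A x_k, and let i_1,…,i_m be indices of m components of largest absolute value in r_k, E_m the corresponding selection matrix, and x_{k+1} = x_k + E_m (E_mᵀ A E_m)^{-1} E_mᵀ r_k. Then ‖x*-x_k‖_A² - ‖x*-x_{k+1}‖_A² ≥ (m / (n λ_max(A))) ‖r_k‖₂². -/
/-!
The update is the Galerkin correction of `x_k` on the span of the selected coordinates, so the
energy-norm error decreases by exactly `yᵀ B⁻¹ y`, where `y = Eᵀ r_k` and `B = Eᵀ A E`. As `E` has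
orthonormal columns, `B ≤ λ_max(A)`, and Cauchy–Schwarz in the `B`-inner product gives
`yᵀ B⁻¹ y ≥ ‖y‖² / λ_max(A)`. Finally `y` keeps the `m` entries of `r_k` of largest modulus, each
dominating every discarded one, so `‖y‖² ≥ (m / n) ‖r_k‖²`.
-/

namespace Finset

theorem card_nsmul_sum_le_card_nsmul_sum_of_le {ι M : Type*} [Fintype ι] [AddCommMonoid M]
    [Preorder M] [AddLeftMono M] (s : Finset ι) (g : ι → M)
    (h : ∀ i ∉ s, ∀ j ∈ s, g i ≤ g j) :
    #s • ∑ i, g i ≤ Fintype.card ι • ∑ i ∈ s, g i := by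
  classical
  have hcompl : ∑ i ∈ sᶜ, #s • g i ≤ #sᶜ • ∑ j ∈ s, g j :=
    sum_le_card_nsmul _ _ _ fun i hi =>
      card_nsmul_le_sum _ _ _ fun j hj => h i (mem_compl.1 hi) j hj
  calc #s • ∑ i, g i = #s • ∑ j ∈ s, g j + ∑ i ∈ sᶜ, #s • g i := by
        rw [← sum_add_sum_compl s, nsmul_add, ← smul_sum]
    _ ≤ #s • ∑ j ∈ s, g j + #sᶜ • ∑ j ∈ s, g j := add_le_add_right hcompl _
    _ = Fintype.card ι • ∑ i ∈ s, g i := by rw [← add_nsmul, card_add_card_compl]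

end Finset

namespace Matrix

variable {ι κ : Type*} [Fintype ι]

theorem card_mul_dotProduct_self_le [Fintype κ] {f : κ → ι} (hf : Function.Injective f)
    (r : ι → ℝ) (hmax : ∀ i ∉ Set.range f, ∀ j, |r i| ≤ |r (f j)|) :
    Fintype.card κ * (r ⬝ᵥ r) ≤ Fintype.card ι * ((r ∘ f) ⬝ᵥ (r ∘ f)) := by
  have hsum := Finset.card_nsmul_sum_le_card_nsmul_sum_of_le (Finset.univ.map ⟨f, hf⟩)
    (fun i => r i * r i) fun i his j hj => by
      obtain ⟨k, -, rfl⟩ := Finset.mem_map.1 hj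
      have hi : i ∉ Set.range f := by simpa [Set.mem_range] using his
      simpa only [Function.Embedding.coeFn_mk, abs_mul_abs_self] using
        mul_self_le_mul_self (abs_nonneg _) (hmax i hi k)
  simpa [dotProduct, nsmul_eq_mul] using hsum

theorem transpose_mul_submatrix_one_id {R : Type*} [Semiring R] [DecidableEq ι] [DecidableEq κ]
    {f : κ → ι} (hf : Function.Injective f) :
    ((1 : Matrix ι ι R).submatrix id f)ᵀ * (1 : Matrix ι ι R).submatrix id f = 1 := by
  rw [transpose_submatrix, transpose_one, ← submatrix_mul _ _ _ _ _ Function.bijective_id,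
    one_mul, submatrix_one _ hf]

theorem transpose_submatrix_one_id_mulVec {R : Type*} [Semiring R] [DecidableEq ι] (f : κ → ι)
    (r : ι → R) : ((1 : Matrix ι ι R).submatrix id f)ᵀ *ᵥ r = r ∘ f := by
  ext j
  simp [mulVec, dotProduct, one_apply]

variable [Fintype κ]

theorem mulVec_dotProduct {R : Type*} [CommSemiring R] (E : Matrix ι κ R) (x : κ → R)
    (w : ι → R) : (E *ᵥ x) ⬝ᵥ w = x ⬝ᵥ Eᵀ *ᵥ w := by
  rw [dotProduct_comm, dotProduct_mulVec, ← mulVec_transpose, dotProduct_comm]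

theorem dotProduct_transpose_mul_mul_mulVec {R : Type*} [CommSemiring R] (A : Matrix ι ι R)
    (E : Matrix ι κ R) (x y : κ → R) :
    x ⬝ᵥ (Eᵀ * A * E) *ᵥ y = (E *ᵥ x) ⬝ᵥ A *ᵥ (E *ᵥ y) := by
  rw [mulVec_dotProduct, mulVec_mulVec, mulVec_mulVec]

open scoped MatrixOrder in
theorem IsHermitian.dotProduct_mulVec_le_of_eigenvalues_le [DecidableEq ι] {A : Matrix ι ι ℝ}
    (hA : A.IsHermitian) {c : ℝ} (h : ∀ i, hA.eigenvalues i ≤ c) (v : ι → ℝ) :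
    v ⬝ᵥ A *ᵥ v ≤ c * (v ⬝ᵥ v) := by
  have hle : A ≤ algebraMap ℝ _ c := le_algebraMap_of_spectrum_le fun x hx => by
    obtain ⟨i, rfl⟩ := hA.spectrum_real_eq_range_eigenvalues ▸ hx
    exact h i
  simpa [sub_mulVec, Algebra.algebraMap_eq_smul_one, smul_mulVec, dotProduct_sub] using
    (le_iff.1 hle).dotProduct_mulVec_nonneg v

theorem dotProduct_transpose_mul_mul_mulVec_le [DecidableEq κ] {A : Matrix ι ι ℝ}
    {E : Matrix ι κ ℝ} (hE : Eᵀ * E = 1) {c : ℝ} (h : ∀ v, v ⬝ᵥ A *ᵥ v ≤ c * (v ⬝ᵥ v)) (w : κ → ℝ) :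
    w ⬝ᵥ (Eᵀ * A * E) *ᵥ w ≤ c * (w ⬝ᵥ w) := by
  have hnorm : (E *ᵥ w) ⬝ᵥ (E *ᵥ w) = w ⬝ᵥ w := by
    rw [mulVec_dotProduct, mulVec_mulVec, hE, one_mulVec]
  rw [dotProduct_transpose_mul_mul_mulVec, ← hnorm]
  exact h _

theorem PosDef.dotProduct_self_le_mul_dotProduct_inv_mulVec [DecidableEq κ] {B : Matrix κ κ ℝ}
    (hB : B.PosDef) {c : ℝ} (h : ∀ v, v ⬝ᵥ B *ᵥ v ≤ c * (v ⬝ᵥ v)) (y : κ → ℝ) :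
    y ⬝ᵥ y ≤ c * (y ⬝ᵥ B⁻¹ *ᵥ y) := by
  set u := B⁻¹ *ᵥ y
  have hBt : Bᵀ = B := (isHermitian_iff_isSymm.1 hB.1).eq
  have hBu : B *ᵥ u = y := by
    rw [mulVec_mulVec, mul_nonsing_inv _ ((isUnit_iff_isUnit_det B).1 hB.isUnit), one_mulVec]
  have hBuy : u ⬝ᵥ B *ᵥ y = y ⬝ᵥ y := by
    rw [dotProduct_mulVec, ← mulVec_transpose, hBt, hBu, dotProduct_comm]
  have hcs := LinearMap.BilinForm.apply_mul_apply_le_of_forall_zero_le (toBilin' B)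
    (fun x => by simpa [toBilin'_apply'] using hB.posSemidef.dotProduct_mulVec_nonneg x) u y
  simp only [toBilin'_apply', hBu, hBuy, dotProduct_comm u y] at hcs
  rcases eq_or_ne y 0 with rfl | hy
  · simp
  have hs : 0 < y ⬝ᵥ y := by simpa using dotProduct_star_self_pos_iff.2 hy
  have hq : 0 ≤ y ⬝ᵥ u := by
    simpa [hBu, dotProduct_comm u y] using hB.posSemidef.dotProduct_mulVec_nonneg u
  nlinarith [mul_le_mul_of_nonneg_left (h y) hq]

theorem dotProduct_mulVec_sub_galerkin [DecidableEq κ] {A : Matrix ι ι ℝ} (hA : A.IsSymm)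
    {E : Matrix ι κ ℝ} (hB : IsUnit (Eᵀ * A * E)) {e r : ι → ℝ} (hr : A *ᵥ e = r) :
    e ⬝ᵥ A *ᵥ e - (e - E *ᵥ ((Eᵀ * A * E)⁻¹ *ᵥ (Eᵀ *ᵥ r)))
        ⬝ᵥ A *ᵥ (e - E *ᵥ ((Eᵀ * A * E)⁻¹ *ᵥ (Eᵀ *ᵥ r)))
      = (Eᵀ *ᵥ r) ⬝ᵥ (Eᵀ * A * E)⁻¹ *ᵥ (Eᵀ *ᵥ r) := by
  set y := Eᵀ *ᵥ r
  set u := (Eᵀ * A * E)⁻¹ *ᵥ y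
  have hBu : (Eᵀ * A * E) *ᵥ u = y := by
    rw [mulVec_mulVec, mul_nonsing_inv _ ((isUnit_iff_isUnit_det _).1 hB), one_mulVec]
  have hcross : (E *ᵥ u) ⬝ᵥ A *ᵥ e = u ⬝ᵥ y := by rw [hr, mulVec_dotProduct]
  have hcross' : e ⬝ᵥ A *ᵥ (E *ᵥ u) = u ⬝ᵥ y := by
    rw [dotProduct_mulVec, ← mulVec_transpose, hA.eq, dotProduct_comm, hcross]
  have hquad : (E *ᵥ u) ⬝ᵥ A *ᵥ (E *ᵥ u) = u ⬝ᵥ y := by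
    rw [← dotProduct_transpose_mul_mul_mulVec, hBu]
  rw [mulVec_sub, sub_dotProduct, dotProduct_sub, dotProduct_sub, hquad, hcross, hcross',
    dotProduct_comm y u]
  ring

end Matrix

open Matrix

theorem stmt_8 {n m : ℕ} (A : Matrix (Fin n) (Fin n) ℝ) (hA : A.PosDef)
    (lmax : ℝ) (hl : IsGreatest (Set.range hA.1.eigenvalues) lmax)
    (b xstar xk : Fin n → ℝ) (hxstar : A.mulVec xstar = b)
    (rk : Fin n → ℝ) (hrk : rk = b - A.mulVec xk)
    (f : Fin m → Fin n) (hf : StrictMono f)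
    (hmax : ∀ i : Fin n, i ∉ Set.range f → ∀ j : Fin m, |rk i| ≤ |rk (f j)|)
    (E : Matrix (Fin n) (Fin m) ℝ) (hE : E = Matrix.of fun i j => if i = f j then 1 else 0)
    (xk1 : Fin n → ℝ)
    (hxk1 : xk1 = xk + E.mulVec ((Eᵀ * A * E)⁻¹.mulVec (Eᵀ.mulVec rk))) :
    (xstar - xk) ⬝ᵥ A.mulVec (xstar - xk)
      - (xstar - xk1) ⬝ᵥ A.mulVec (xstar - xk1)
      ≥ ((m : ℝ) / (n * lmax)) * (rk ⬝ᵥ rk) := by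
  have hsel : E = (1 : Matrix (Fin n) (Fin n) ℝ).submatrix id f :=
    hE.trans (by ext; simp [one_apply])
  have hEE : Eᵀ * E = 1 := hsel ▸ transpose_mul_submatrix_one_id hf.injective
  have hEr : Eᵀ *ᵥ rk = rk ∘ f := hsel ▸ transpose_submatrix_one_id_mulVec f rk
  have hB : (Eᵀ * A * E).PosDef := by
    simpa using hA.conjTranspose_mul_mul_same
      (Function.LeftInverse.injective (g := (Eᵀ *ᵥ ·)) fun v => by simp [mulVec_mulVec, hEE])
  have hdecrease := dotProduct_mulVec_sub_galerkin (isHermitian_iff_isSymm.1 hA.1) hB.isUnit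
    (e := xstar - xk) (r := rk) (by rw [mulVec_sub, hxstar, hrk])
  have hstep : xstar - xk1 = xstar - xk - E *ᵥ ((Eᵀ * A * E)⁻¹ *ᵥ (Eᵀ *ᵥ rk)) := by
    rw [hxk1]; abel
  rw [hstep, hdecrease, hEr]
  have hrayleigh := hB.dotProduct_self_le_mul_dotProduct_inv_mulVec
    (dotProduct_transpose_mul_mul_mulVec_le hEE
      (hA.1.dotProduct_mulVec_le_of_eigenvalues_le fun i => hl.2 ⟨i, rfl⟩)) (rk ∘ f)
  have hgreedy := card_mul_dotProduct_self_le hf.injective rk hmax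
  simp only [Fintype.card_fin] at hgreedy
  obtain ⟨i₀, hi₀⟩ := hl.1
  have hlmax : 0 < lmax := hi₀ ▸ hA.eigenvalues_pos i₀
  have hn : (0 : ℝ) < n := by exact_mod_cast i₀.pos
  rw [ge_iff_le, div_mul_eq_mul_div, div_le_iff₀ (by positivity)]
  linarith [mul_le_mul_of_nonneg_left hrayleigh hn.le]
end

section
/- With E_m a selection of m distinct standard basis columns and A SPD, the decrease in squared A-norm error for the update x_{k+1} = x_k + E_m(E_mᵀAE_m)^{-1}E_mᵀ r_k satisfies ‖x*-x_k‖_A² - ‖x*-x_{k+1}‖_A² ≥ ‖E_mᵀ r_k‖₂² / λ_max(A). -/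
open Matrix

/-! The error `e = x* - x_k` satisfies `A e = r_k`, and the update is the Galerkin correction
of `e` on the span of the selected columns, so the energy drops by `sᵀ B⁻¹ s` with
`B = Eᵀ A E` and `s = Eᵀ r_k`. Since `E` selects coordinates, `B` is the principal submatrix
`A[f, f]`, hence `0 ≤ B ≤ λ_max` in the Loewner order, so `B² ≤ λ_max B`; with `y = B⁻¹ s`
this reads `‖s‖² = yᵀ B² y ≤ λ_max yᵀ B y = λ_max sᵀ B⁻¹ s`. -/

namespace Matrix

open scoped MatrixOrder

theorem mulVec_dotProduct_eq_dotProduct_transpose_mulVec {n m R : Type*} [Fintype n] [Fintype m]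
    [CommSemiring R] (E : Matrix n m R) (y : m → R) (w : n → R) :
    (E *ᵥ y) ⬝ᵥ w = y ⬝ᵥ (Eᵀ *ᵥ w) := by
  rw [dotProduct_comm, dotProduct_mulVec, ← mulVec_transpose, dotProduct_comm]

theorem IsSymm.energy_decrease_galerkin {n m : Type*} [Fintype n] [Fintype m] [DecidableEq m]
    {A : Matrix n n ℝ} (hA : A.IsSymm) (E : Matrix n m ℝ)
    (hdet : IsUnit (Eᵀ * A * E).det) (e : n → ℝ) :
    e ⬝ᵥ A *ᵥ e - (e - E *ᵥ ((Eᵀ * A * E)⁻¹ *ᵥ (Eᵀ *ᵥ (A *ᵥ e)))) ⬝ᵥ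
        A *ᵥ (e - E *ᵥ ((Eᵀ * A * E)⁻¹ *ᵥ (Eᵀ *ᵥ (A *ᵥ e)))) =
      (Eᵀ *ᵥ (A *ᵥ e)) ⬝ᵥ (Eᵀ * A * E)⁻¹ *ᵥ (Eᵀ *ᵥ (A *ᵥ e)) := by
  set s := Eᵀ *ᵥ (A *ᵥ e)
  set y := (Eᵀ * A * E)⁻¹ *ᵥ s
  have hcross : (E *ᵥ y) ⬝ᵥ A *ᵥ e = s ⬝ᵥ y := by
    rw [mulVec_dotProduct_eq_dotProduct_transpose_mulVec, dotProduct_comm]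
  have hsymm : e ⬝ᵥ A *ᵥ (E *ᵥ y) = (E *ᵥ y) ⬝ᵥ A *ᵥ e := by
    rw [dotProduct_mulVec, ← mulVec_transpose, hA.eq, dotProduct_comm]
  have hquad : (E *ᵥ y) ⬝ᵥ A *ᵥ (E *ᵥ y) = s ⬝ᵥ y := by
    have hy : (Eᵀ * A * E) *ᵥ y = s := by rw [mulVec_mulVec, mul_nonsing_inv _ hdet, one_mulVec]
    rw [mulVec_dotProduct_eq_dotProduct_transpose_mulVec, mulVec_mulVec, mulVec_mulVec, hy,
      dotProduct_comm]
  rw [mulVec_sub, dotProduct_sub, sub_dotProduct, sub_dotProduct, hsymm, hcross, hquad]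
  ring

def selectionMatrix (R : Type*) [Zero R] [One R] {n m : Type*} [DecidableEq n] (f : m → n) :
    Matrix n m R :=
  of fun i j => if i = f j then 1 else 0

theorem selectionMatrix_transpose_mul_mul {R n m : Type*} [CommSemiring R] [Fintype n]
    [DecidableEq n] (A : Matrix n n R) (f : m → n) :
    (selectionMatrix R f)ᵀ * A * selectionMatrix R f = A.submatrix f f := by
  ext j k
  simp [selectionMatrix, mul_apply]

theorem IsHermitian.le_smul_one_of_eigenvalues_le {n : Type*} [Fintype n] [DecidableEq n]
    {A : Matrix n n ℝ} (hA : A.IsHermitian) {l : ℝ} (hl : ∀ i, hA.eigenvalues i ≤ l) :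
    A ≤ l • 1 := by
  rw [← Algebra.algebraMap_eq_smul_one, le_algebraMap_iff_spectrum_le hA.isSelfAdjoint,
    hA.spectrum_real_eq_range_eigenvalues]
  rintro _ ⟨i, rfl⟩
  exact hl i

theorem submatrix_le_smul_one {n m : Type*} [DecidableEq n] [DecidableEq m]
    {A : Matrix n n ℝ} {l : ℝ} (hA : A ≤ l • 1) {f : m → n} (hf : Function.Injective f) :
    A.submatrix f f ≤ l • 1 := by
  rw [le_iff] at hA ⊢
  simpa [submatrix_sub, submatrix_smul, submatrix_one f hf] using hA.submatrix f

theorem PosSemidef.mul_self_le_smul {m : Type*} [Fintype m] [DecidableEq m]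
    {B : Matrix m m ℝ} (hB : B.PosSemidef) {l : ℝ} (hBl : B ≤ l • 1) :
    B * B ≤ l • B := by
  rw [← Algebra.algebraMap_eq_smul_one, le_algebraMap_iff_spectrum_le hB.isHermitian] at hBl
  have hspec := spectrum_nonneg_of_nonneg (𝕜 := ℝ) hB.nonneg
  rw [← sq, ← cfc_const_mul_id l B, ← cfc_pow_id (R := ℝ) B 2, cfc_le_iff _ _ B]
  intro x hx
  rw [sq]
  exact mul_le_mul_of_nonneg_right (hBl x hx) (hspec hx)

theorem PosDef.dotProduct_self_le_mul_dotProduct_inv_mulVec_s9 {m : Type*} [Fintype m]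
    [DecidableEq m] {B : Matrix m m ℝ} (hB : B.PosDef) {l : ℝ} (hBl : B ≤ l • 1)
    (s : m → ℝ) :
    s ⬝ᵥ s ≤ l * (s ⬝ᵥ B⁻¹ *ᵥ s) := by
  set y := B⁻¹ *ᵥ s
  have hy : B *ᵥ y = s := by
    rw [mulVec_mulVec, mul_nonsing_inv _ ((isUnit_iff_isUnit_det B).mp hB.isUnit), one_mulVec]
  have hgap := (le_iff.mp (hB.posSemidef.mul_self_le_smul hBl)).dotProduct_mulVec_nonneg y
  have hss : s ⬝ᵥ s = y ⬝ᵥ (B * B) *ᵥ y := by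
    rw [← mulVec_mulVec, hy, ← (isHermitian_iff_isSymm.mp hB.isHermitian).eq,
      ← mulVec_dotProduct_eq_dotProduct_transpose_mulVec, hy]
  rw [star_trivial, sub_mulVec, dotProduct_sub, smul_mulVec, dotProduct_smul, hy, ← hss,
    dotProduct_comm y s, smul_eq_mul] at hgap
  linarith

end Matrix

theorem stmt_9 {n m : ℕ} (A : Matrix (Fin n) (Fin n) ℝ) (hA : A.PosDef)
    (lmax : ℝ) (hl : IsGreatest (Set.range hA.1.eigenvalues) lmax)
    (b xstar xk : Fin n → ℝ) (hxstar : A.mulVec xstar = b)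
    (rk : Fin n → ℝ) (hrk : rk = b - A.mulVec xk)
    (f : Fin m → Fin n) (hf : Function.Injective f)
    (E : Matrix (Fin n) (Fin m) ℝ) (hE : E = Matrix.of fun i j => if i = f j then 1 else 0)
    (xk1 : Fin n → ℝ)
    (hxk1 : xk1 = xk + E.mulVec ((Eᵀ * A * E)⁻¹.mulVec (Eᵀ.mulVec rk))) :
    (xstar - xk) ⬝ᵥ A.mulVec (xstar - xk)
      - (xstar - xk1) ⬝ᵥ A.mulVec (xstar - xk1)
      ≥ ((Eᵀ.mulVec rk) ⬝ᵥ (Eᵀ.mulVec rk)) / lmax := by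
  have hB : Eᵀ * A * E = A.submatrix f f := hE ▸ selectionMatrix_transpose_mul_mul A f
  have hBpos : (Eᵀ * A * E).PosDef := hB ▸ hA.submatrix hf
  have hlpos : 0 < lmax := by
    obtain ⟨i, rfl⟩ := hl.1
    exact hA.eigenvalues_pos i
  have hres : rk = A *ᵥ (xstar - xk) := by rw [hrk, mulVec_sub, hxstar]
  have hstep : xstar - xk1 = xstar - xk - E *ᵥ ((Eᵀ * A * E)⁻¹ *ᵥ (Eᵀ *ᵥ rk)) := by
    rw [hxk1, sub_add_eq_sub_sub]
  rw [hstep, hres, (isHermitian_iff_isSymm.mp hA.isHermitian).energy_decrease_galerkin E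
    ((isUnit_iff_isUnit_det _).mp hBpos.isUnit), hB, ge_iff_le, div_le_iff₀ hlpos, mul_comm]
  exact (hA.submatrix hf).dotProduct_self_le_mul_dotProduct_inv_mulVec_s9 (submatrix_le_smul_one
    (hA.isHermitian.le_smul_one_of_eigenvalues_le fun i => hl.2 ⟨i, rfl⟩) hf) _
end
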